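/- The limiting Gaussian process Z*_diff has covariance function ρ*_diff(u,v) = (u∧v)(1−(u∨v)) / √[(u∧v)(1−(u∧v))(u∨v)(1−(u∨v))] for 0 < u, v < 1. Equivalently, for 0 < u ≤ v < 1, the limit of Cov(Z_diff([nu]), Z_diff([nv])) as n → ∞ equals √[u(1−v)] / √[v(1−u)]. -/

import Mathlib

open Finset
open scoped Classical

noncomputable section

/-- Label of vertex `v` under permutation `π`: a value in `{1,...,n}`. -/
def lab {n : ℕ} (π : Equiv.Perm (Fin n)) (v : Fin n) : ℕ := (π v).val + 1

/-- Number of edges of `G` with both endpoint labels `≤ t`. -/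
def R1 {n : ℕ} (G : SimpleGraph (Fin n)) (t : ℕ) (π : Equiv.Perm (Fin n)) : ℕ :=
  (G.edgeFinset.filter (fun e => ∀ v ∈ e, lab π v ≤ t)).card

/-- Number of edges of `G` with both endpoint labels `> t`. -/
def R2 {n : ℕ} (G : SimpleGraph (Fin n)) (t : ℕ) (π : Equiv.Perm (Fin n)) : ℕ :=
  (G.edgeFinset.filter (fun e => ∀ v ∈ e, t < lab π v)).card

/-- Number of edges of `G` with one endpoint label `≤ t` and the other `> t`. -/
def R0 {n : ℕ} (G : SimpleGraph (Fin n)) (t : ℕ) (π : Equiv.Perm (Fin n)) : ℕ :=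
  (G.edgeFinset.filter (fun e => (∃ v ∈ e, lab π v ≤ t) ∧ (∃ v ∈ e, t < lab π v))).card

/-- Expectation under the permutation null distribution (uniform over all `n!` permutations). -/
def Ex {n : ℕ} (f : Equiv.Perm (Fin n) → ℝ) : ℝ :=
  (∑ π : Equiv.Perm (Fin n), f π) / (Nat.factorial n)

/-- Variance under the permutation null distribution. -/
def Var {n : ℕ} (f : Equiv.Perm (Fin n) → ℝ) : ℝ := Ex (fun π => (f π - Ex f) ^ 2)

/-- Covariance under the permutation null distribution. -/
def Cov {n : ℕ} (f g : Equiv.Perm (Fin n) → ℝ) : ℝ :=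
  Ex (fun π => (f π - Ex f) * (g π - Ex g))

/-- Difference of within-group edge counts `R_diff(t) = R₁(t) - R₂(t)`. -/
def Rdiff {n : ℕ} (G : SimpleGraph (Fin n)) (t : ℕ) (π : Equiv.Perm (Fin n)) : ℝ :=
  (R1 G t π : ℝ) - (R2 G t π : ℝ)


/-- Standardized difference-of-within-edge-counts statistic. -/
def Zdiff {n : ℕ} (G : SimpleGraph (Fin n)) (t : ℕ) (π : Equiv.Perm (Fin n)) : ℝ :=
  (Rdiff G t π - Ex (fun σ => Rdiff G t σ)) / Real.sqrt (Var (fun σ => Rdiff G t σ))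


/-!
Each edge contributes `𝟙[both ends ≤ t] − 𝟙[both ends > t] = #(ends ≤ t) − 1`, so
`R_diff(t) = ∑_w deg w · 𝟙[π w < t] − |G|` is a linear statistic of a sample without replacement.
By exchangeability, the covariance matrix of the indicators `𝟙[π v < s]`, `𝟙[π w < t]` has one
diagonal value, `(s/n)(1 − t/n)` for `s ≤ t`, and one off-diagonal value, which is fixed by the
rows summing to zero (`∑_w 𝟙[π w < t] = t` is constant). Hence
`Cov(R_diff(s), R_diff(t)) = (s/n)(1 − t/n) · c_G` with `c_G` independent of `s, t`: the
correlation is that of a Brownian bridge, whatever `G` is.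
-/

open Filter Topology

section PermutationNull

variable {n : ℕ}

lemma Ex_add (f g : Equiv.Perm (Fin n) → ℝ) : Ex (fun π => f π + g π) = Ex f + Ex g := by
  simp only [Ex, Finset.sum_add_distrib, add_div]

lemma Ex_const_mul (c : ℝ) (f : Equiv.Perm (Fin n) → ℝ) : Ex (fun π => c * f π) = c * Ex f := by
  simp only [Ex, ← Finset.mul_sum, mul_div_assoc]

lemma Ex_const (c : ℝ) : Ex (fun _ : Equiv.Perm (Fin n) => c) = c := by
  have : (n.factorial : ℝ) ≠ 0 := by positivity
  simp [Ex, Finset.card_univ, Fintype.card_perm, this]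

lemma Ex_sum {ι : Type*} (s : Finset ι) (f : ι → Equiv.Perm (Fin n) → ℝ) :
    Ex (fun π => ∑ i ∈ s, f i π) = ∑ i ∈ s, Ex (f i) := by
  simp only [Ex, ← Finset.sum_div]
  rw [Finset.sum_comm]

lemma Ex_comp_mul_right (f : Equiv.Perm (Fin n) → ℝ) (σ : Equiv.Perm (Fin n)) :
    Ex (fun π => f (π * σ)) = Ex f := by
  rw [Ex, Ex, ← Equiv.sum_comp (Equiv.mulRight σ) f]
  rfl

lemma Cov_eq_sub (f g : Equiv.Perm (Fin n) → ℝ) :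
    Cov f g = Ex (fun π => f π * g π) - Ex f * Ex g := by
  have hexpand : (fun π => (f π - Ex f) * (g π - Ex g))
      = fun π => (f π * g π + (-Ex g) * f π) + ((-Ex f) * g π + Ex f * Ex g) := by
    funext π; ring
  rw [Cov, hexpand, Ex_add, Ex_add, Ex_add, Ex_const_mul, Ex_const_mul, Ex_const]
  ring

lemma Var_eq_Cov (f : Equiv.Perm (Fin n) → ℝ) : Var f = Cov f f := by
  simp only [Var, Cov, sq]

lemma Cov_comp_mul_right (f g : Equiv.Perm (Fin n) → ℝ) (σ : Equiv.Perm (Fin n)) :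
    Cov (fun π => f (π * σ)) (fun π => g (π * σ)) = Cov f g := by
  simp only [Cov, Ex_comp_mul_right f, Ex_comp_mul_right g]
  exact Ex_comp_mul_right (fun π => (f π - Ex f) * (g π - Ex g)) σ

lemma Cov_sum_left {ι : Type*} (s : Finset ι) (f : ι → Equiv.Perm (Fin n) → ℝ)
    (g : Equiv.Perm (Fin n) → ℝ) :
    Cov (fun π => ∑ i ∈ s, f i π) g = ∑ i ∈ s, Cov (f i) g := by
  simp only [Cov, Ex_sum, ← Finset.sum_sub_distrib, Finset.sum_mul]

lemma Cov_sum_right {ι : Type*} (s : Finset ι) (f : Equiv.Perm (Fin n) → ℝ)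
    (g : ι → Equiv.Perm (Fin n) → ℝ) :
    Cov f (fun π => ∑ i ∈ s, g i π) = ∑ i ∈ s, Cov f (g i) := by
  simp only [Cov, Ex_sum, ← Finset.sum_sub_distrib, Finset.mul_sum]

lemma Cov_const_mul_left (c : ℝ) (f g : Equiv.Perm (Fin n) → ℝ) :
    Cov (fun π => c * f π) g = c * Cov f g := by
  simp only [Cov, Ex_const_mul, ← mul_sub, mul_assoc]

lemma Cov_const_mul_right (c : ℝ) (f g : Equiv.Perm (Fin n) → ℝ) :
    Cov f (fun π => c * g π) = c * Cov f g := by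
  simp only [Cov, Ex_const_mul, ← mul_sub, mul_left_comm _ c]

lemma Cov_const_right (f : Equiv.Perm (Fin n) → ℝ) (c : ℝ) :
    Cov f (fun _ => c) = 0 := by
  simp [Cov, Ex_const]

lemma Cov_sub_const (f g : Equiv.Perm (Fin n) → ℝ) (c d : ℝ) :
    Cov (fun π => f π - c) (fun π => g π - d) = Cov f g := by
  have hEx : ∀ (h : Equiv.Perm (Fin n) → ℝ) (c : ℝ), Ex (fun π => h π - c) = Ex h - c :=
    fun h c => by simpa [← sub_eq_add_neg, Ex_const] using Ex_add h (fun _ => -c)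
  simp only [Cov, hEx, sub_sub_sub_cancel_right]

lemma Cov_div_const (f g : Equiv.Perm (Fin n) → ℝ) (a b : ℝ) :
    Cov (fun π => f π / a) (fun π => g π / b) = Cov f g / (a * b) := by
  simp only [div_eq_inv_mul, Cov_const_mul_left, Cov_const_mul_right, mul_inv]
  ring

end PermutationNull

section Exchangeability

variable {n : ℕ}

lemma Ex_apply (v : Fin n) (f : Fin n → ℝ) : Ex (fun π => f (π v)) = (∑ a, f a) / n := by
  have hw : ∀ w, Ex (fun π => f (π w)) = Ex (fun π => f (π v)) := fun w => by
    simpa using Ex_comp_mul_right (fun π => f (π v)) (Equiv.swap v w)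
  have hsum : ∑ w, Ex (fun π => f (π w)) = ∑ a, f a := by
    rw [← Ex_sum]
    simp only [Equiv.sum_comp _ f]
    exact Ex_const _
  simp only [hw, Finset.sum_const, Finset.card_univ, Fintype.card_fin, nsmul_eq_mul] at hsum
  have hn : (n : ℝ) ≠ 0 := Nat.cast_ne_zero.mpr (Fin.pos v).ne'
  rw [← hsum, mul_div_cancel_left₀ _ hn]

theorem sub_one_mul_Cov_sum_sum (v₀ : Fin n) (f g d e : Fin n → ℝ) :
    ((n : ℝ) - 1) * Cov (fun π => ∑ v, d v * f (π v)) (fun π => ∑ w, e w * g (π w))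
      = Cov (fun π => f (π v₀)) (fun π => g (π v₀))
          * (n * ∑ v, d v * e v - (∑ v, d v) * ∑ w, e w) := by
  set C : Fin n → Fin n → ℝ := fun v w => Cov (fun π => f (π v)) (fun π => g (π w)) with hC
  have hperm : ∀ σ : Equiv.Perm (Fin n), ∀ v w, C (σ v) (σ w) = C v w := fun σ v w =>
    Cov_comp_mul_right (fun π => f (π v)) (fun π => g (π w)) σ
  have hdiag : ∀ v, C v v = C v₀ v₀ := fun v => by
    simpa using hperm (Equiv.swap v₀ v) v₀ v₀
  have hrow : ∀ v, ∑ w, C v w = 0 := fun v => by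
    simp only [hC, ← Cov_sum_right, Equiv.sum_comp _ g, Cov_const_right]
  have hoff : ∀ v w, v ≠ w → ((n : ℝ) - 1) * C v w = -C v₀ v₀ := by
    intro v w hvw
    have hrest : ∀ w' ∈ Finset.univ.erase v, C v w' = C v w := fun w' hw' => by
      have hw'v := Finset.ne_of_mem_erase hw'
      simpa [Equiv.swap_apply_of_ne_of_ne hvw hw'v.symm] using hperm (Equiv.swap w w') v w
    have h := hrow v
    rw [← Finset.add_sum_erase _ _ (Finset.mem_univ v), hdiag v, Finset.sum_congr rfl hrest,
      Finset.sum_const, Finset.card_erase_of_mem (Finset.mem_univ v), Finset.card_univ,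
      Fintype.card_fin, nsmul_eq_mul, Nat.cast_pred (Fin.pos v)] at h
    linarith
  have hentry : ∀ v w,
      ((n : ℝ) - 1) * C v w = C v₀ v₀ * (n * (if v = w then 1 else 0) - 1) := by
    intro v w
    by_cases hvw : v = w
    · subst hvw; rw [hdiag]; simp only [if_true]; ring
    · rw [hoff v w hvw]; simp [hvw]
  calc ((n : ℝ) - 1) * Cov (fun π => ∑ v, d v * f (π v)) (fun π => ∑ w, e w * g (π w))
      = ∑ v, ∑ w, d v * e w * (((n : ℝ) - 1) * C v w) := by
        rw [Cov_sum_left, Finset.mul_sum]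
        simp only [Cov_const_mul_left, Cov_sum_right, Cov_const_mul_right, Finset.mul_sum]
        exact Finset.sum_congr rfl fun v _ => Finset.sum_congr rfl fun w _ => by ring
    _ = ∑ v, ∑ w, d v * e w * (C v₀ v₀ * (n * (if v = w then 1 else 0) - 1)) := by
        simp only [hentry]
    _ = C v₀ v₀ * (n * ∑ v, d v * e v - (∑ v, d v) * ∑ w, e w) := by
        simp only [mul_sub, mul_ite, mul_one, mul_zero, Finset.sum_sub_distrib,
          Finset.sum_ite_eq, Finset.mem_univ, if_true, Finset.mul_sum]
        congr 1
        · exact Finset.sum_congr rfl fun v _ => by ring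
        · rw [Finset.sum_comm]
          simp only [Finset.sum_mul, Finset.mul_sum]
          exact Finset.sum_congr rfl fun w _ => Finset.sum_congr rfl fun v _ => by ring

end Exchangeability

section EdgeCounts

variable {n : ℕ}

def lowerIndicator (t : ℕ) (a : Fin n) : ℝ := if (a : ℕ) < t then 1 else 0

lemma sum_lowerIndicator {t : ℕ} (ht : t ≤ n) : ∑ a : Fin n, lowerIndicator t a = t := by
  simp only [lowerIndicator, Finset.sum_boole, Fin.card_filter_val_lt, min_eq_right ht]

lemma lowerIndicator_mul_of_le {s t : ℕ} (hst : s ≤ t) (a : Fin n) :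
    lowerIndicator s a * lowerIndicator t a = lowerIndicator s a := by
  by_cases ha : (a : ℕ) < s
  · simp [lowerIndicator, ha, ha.trans_le hst]
  · simp [lowerIndicator, ha]

lemma Cov_lowerIndicator {s t : ℕ} (hst : s ≤ t) (ht : t ≤ n) (v : Fin n) :
    Cov (fun π => lowerIndicator s (π v)) (fun π => lowerIndicator t (π v))
      = s / n * (1 - t / n) := by
  have hn : (n : ℝ) ≠ 0 := Nat.cast_ne_zero.mpr (Fin.pos v).ne'
  simp only [Cov_eq_sub, lowerIndicator_mul_of_le hst, Ex_apply, sum_lowerIndicator ht,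
    sum_lowerIndicator (hst.trans ht)]
  field_simp

lemma lab_le_iff (π : Equiv.Perm (Fin n)) (v : Fin n) (t : ℕ) :
    lab π v ≤ t ↔ ((π v : ℕ) < t) := by
  unfold lab; omega

lemma edge_indicator_sub (π : Equiv.Perm (Fin n)) (t : ℕ) (x y : Fin n) :
    ((if ∀ v ∈ s(x, y), lab π v ≤ t then 1 else 0 : ℝ)
        - if ∀ v ∈ s(x, y), t < lab π v then 1 else 0)
      = lowerIndicator t (π x) + lowerIndicator t (π y) - 1 := by
  simp only [Sym2.mem_iff, forall_eq_or_imp, forall_eq, ← not_le, lab_le_iff, lowerIndicator]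
  split_ifs <;> simp_all

lemma sum_ite_mem_sym2 {V : Type*} [Fintype V] [DecidableEq V] {x y : V} (hxy : x ≠ y)
    (c : V → ℝ) : ∑ w, (if w ∈ s(x, y) then c w else 0) = c x + c y := by
  have hfilter : Finset.univ.filter (· ∈ s(x, y)) = {x, y} := by
    ext w; simp [Sym2.mem_iff]
  rw [← Finset.sum_filter, hfilter, Finset.sum_pair hxy]

lemma sum_edgeFinset_sum_mem {V : Type*} [Fintype V] [DecidableEq V] (G : SimpleGraph V)
    (c : V → ℝ) :
    ∑ e ∈ G.edgeFinset, ∑ w, (if w ∈ e then c w else 0) = ∑ w, G.degree w * c w := by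
  rw [Finset.sum_comm]
  refine Finset.sum_congr rfl fun w _ => ?_
  rw [← Finset.sum_filter, Finset.sum_const, nsmul_eq_mul, ← G.incidenceFinset_eq_filter,
    G.card_incidenceFinset_eq_degree]

lemma Rdiff_eq_sum (G : SimpleGraph (Fin n)) (t : ℕ) (π : Equiv.Perm (Fin n)) :
    Rdiff G t π = ∑ w, (G.degree w : ℝ) * lowerIndicator t (π w) - G.edgeFinset.card := by
  have hedge : ∀ e ∈ G.edgeFinset,
      ((if ∀ v ∈ e, lab π v ≤ t then 1 else 0 : ℝ) - if ∀ v ∈ e, t < lab π v then 1 else 0)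
        = ∑ w, (if w ∈ e then lowerIndicator t (π w) else 0) - 1 := by
    intro e he
    induction e with
    | h x y =>
      have hxy : x ≠ y := fun h => G.not_isDiag_of_mem_edgeFinset he (by simp [h])
      rw [edge_indicator_sub, sum_ite_mem_sym2 hxy]
  have hR : Rdiff G t π = ∑ e ∈ G.edgeFinset,
      ((if ∀ v ∈ e, lab π v ≤ t then 1 else 0 : ℝ) - if ∀ v ∈ e, t < lab π v then 1 else 0) := by
    simp only [Rdiff, R1, R2, Finset.card_filter, Finset.sum_sub_distrib]
    push_cast
    rfl
  rw [hR, Finset.sum_congr rfl hedge, Finset.sum_sub_distrib,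
    sum_edgeFinset_sum_mem G (fun w => lowerIndicator t (π w))]
  simp

end EdgeCounts

lemma Cov_Rdiff {n s t : ℕ} (hn : 2 ≤ n) (G : SimpleGraph (Fin n)) (hst : s ≤ t) (ht : t ≤ n) :
    Cov (fun π => Rdiff G s π) (fun π => Rdiff G t π)
      = s / n * (1 - t / n)
          * ((n * ∑ w, (G.degree w : ℝ) ^ 2 - (∑ w, (G.degree w : ℝ)) ^ 2) / (n - 1)) := by
  have hn1 : (n : ℝ) - 1 ≠ 0 := by
    have : (2 : ℝ) ≤ n := by exact_mod_cast hn
    linarith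
  simp only [Rdiff_eq_sum, Cov_sub_const]
  rw [← mul_div_assoc, eq_div_iff hn1, mul_comm,
    sub_one_mul_Cov_sum_sum ⟨0, by omega⟩, Cov_lowerIndicator hst ht]
  simp only [sq]

lemma Cov_Zdiff {n : ℕ} (G : SimpleGraph (Fin n)) (s t : ℕ) :
    Cov (fun π => Zdiff G s π) (fun π => Zdiff G t π)
      = Cov (fun π => Rdiff G s π) (fun π => Rdiff G t π)
          / (√(Var fun π => Rdiff G s π) * √(Var fun π => Rdiff G t π)) := by
  simp only [Zdiff, Cov_div_const, Cov_sub_const]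

theorem brownianBridge_correlation {a b c : ℝ} (ha : 0 < a) (hab : a ≤ b) (hb : b < 1)
    (hc : 0 < c) :
    a * (1 - b) * c / (√(a * (1 - a) * c) * √(b * (1 - b) * c))
      = √(a * (1 - b)) / √(b * (1 - a)) := by
  have hx : 0 < a * (1 - b) := mul_pos ha (by linarith)
  have hy : 0 < b * (1 - a) := mul_pos (by linarith) (by linarith)
  have hden : √(a * (1 - a) * c) * √(b * (1 - b) * c) = c * (√(a * (1 - b)) * √(b * (1 - a))) :=
    calc √(a * (1 - a) * c) * √(b * (1 - b) * c)
        = √((c * c) * (a * (1 - b) * (b * (1 - a)))) := by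
          rw [← Real.sqrt_mul (mul_nonneg (mul_nonneg ha.le (by linarith)) hc.le)]; ring_nf
      _ = c * (√(a * (1 - b)) * √(b * (1 - a))) := by
          rw [Real.sqrt_mul (mul_self_nonneg c), Real.sqrt_mul_self hc.le, Real.sqrt_mul hx.le]
  rw [hden]
  field_simp
  exact (Real.sq_sqrt hx.le).symm

lemma Cov_Zdiff_eq {n s t : ℕ} (hn : 2 ≤ n) (G : SimpleGraph (Fin n)) (hst : s ≤ t) (ht : t < n)
    (hVar : 0 < Var fun π => Rdiff G s π) :
    Cov (fun π => Zdiff G s π) (fun π => Zdiff G t π)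
      = √(s / n * (1 - t / n)) / √(t / n * (1 - s / n)) := by
  set c := ((n * ∑ w, (G.degree w : ℝ) ^ 2 - (∑ w, (G.degree w : ℝ)) ^ 2) / (n - 1))
  have hn0 : (0 : ℝ) < n := by positivity
  have ha : (0 : ℝ) ≤ s / n := by positivity
  have hb : (t : ℝ) / n < 1 := (div_lt_one hn0).mpr (by exact_mod_cast ht)
  have hab : (s : ℝ) / n ≤ t / n := by gcongr
  rw [Var_eq_Cov, Cov_Rdiff hn G le_rfl (hst.trans ht.le)] at hVar
  have ha' : 0 < (s : ℝ) / n := ha.lt_of_ne (by rintro h; rw [← h] at hVar; simp at hVar)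
  have hc : 0 < c := pos_of_mul_pos_right hVar (mul_nonneg ha (by linarith))
  rw [Cov_Zdiff, Var_eq_Cov, Var_eq_Cov, Cov_Rdiff hn G hst ht.le,
    Cov_Rdiff hn G le_rfl (hst.trans ht.le), Cov_Rdiff hn G le_rfl ht.le]
  exact brownianBridge_correlation ha' hab hb hc

lemma tendsto_natFloor_mul_div_natCast {x : ℝ} (hx : 0 ≤ x) :
    Tendsto (fun n : ℕ => (⌊(n : ℝ) * x⌋₊ : ℝ) / n) atTop (𝓝 x) := by
  simpa only [Function.comp_def, mul_comm x] using
    (tendsto_nat_floor_mul_div_atTop hx).comp tendsto_natCast_atTop_atTop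

theorem limiting_covariance_Zdiff (u v : ℝ) (hu : 0 < u) (huv : u ≤ v) (hv : v < 1)
    (G : ∀ n : ℕ, SimpleGraph (Fin n))
    (hVar : ∀ᶠ n : ℕ in Filter.atTop,
        0 < Var (fun π => Rdiff (G n) ⌊(n : ℝ) * u⌋₊ π) ∧
        0 < Var (fun π => Rdiff (G n) ⌊(n : ℝ) * v⌋₊ π)) :
    Filter.Tendsto
      (fun n : ℕ =>
        Cov (fun π => Zdiff (G n) ⌊(n : ℝ) * u⌋₊ π) (fun π => Zdiff (G n) ⌊(n : ℝ) * v⌋₊ π))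
      Filter.atTop
      (nhds (Real.sqrt (u * (1 - v)) / Real.sqrt (v * (1 - u)))) := by
  have hv0 : 0 < v := hu.trans_le huv
  have hU := tendsto_natFloor_mul_div_natCast hu.le
  have hV := tendsto_natFloor_mul_div_natCast hv0.le
  have h1 : Tendsto (fun _ : ℕ => (1 : ℝ)) atTop (𝓝 1) := tendsto_const_nhds
  have hlim := ((hU.mul (h1.sub hV)).sqrt).div ((hV.mul (h1.sub hU)).sqrt)
    (Real.sqrt_ne_zero'.2 (mul_pos hv0 (sub_pos.2 (huv.trans_lt hv))))
  refine hlim.congr' ?_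
  filter_upwards [Filter.eventually_ge_atTop 2, hVar] with n hn ⟨hVar_u, _⟩
  have hn0 : (0 : ℝ) < n := by positivity
  have hst : ⌊(n : ℝ) * u⌋₊ ≤ ⌊(n : ℝ) * v⌋₊ := Nat.floor_le_floor (by gcongr)
  have htn : ⌊(n : ℝ) * v⌋₊ < n := (Nat.floor_lt (by positivity)).2 (mul_lt_of_lt_one_right hn0 hv)
  exact (Cov_Zdiff_eq hn (G n) hst htn hVar_u).symm
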